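/- arXiv:1905.02999 — 2 statements merged into one kernel-verified Lean document; each statement's English description precedes it below -/
import Mathlib

section
/- Let A ∈ M_{M×N}(ℓ²(G)) and B ∈ M_{N×M}(ℓ²(G)) with transfer matrices Â and B̂ having all entries in L^∞(Ĝ). Let a*_m denote the m-th column of the involuted matrix A*, and b_m the m-th column of B. Then the sequences {T_g a*_m : g ∈ G, m = 1,…,M} and {T_g b_m : g ∈ G, m = 1,…,M} form a pair of dual frames for ℓ²_N(G) if and only if B̂(ξ) Â(ξ) = I_N for a.e. ξ ∈ Ĝ. -/
/-!
Conjugating by the Fourier isometry `F : ℓ²(G) → L²(Ĝ)` turns the translation `T_g` into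
multiplication by the character `⟨-g, ·⟩` and the involution into complex conjugation, while
`{F δ_g}` is a Hilbert basis of `L²(Ĝ)`. Hence `⟪T_g a*_m, x⟫` is the `g`-th coefficient of
`(Â x̂)_m` in that basis: by Parseval the analysis sum of `{T_g a*_m}` is `‖Â x̂‖²`, and the
expansion `Σ ⟪T_g a*_m, x⟫ T_g b_m` is the inverse transform of `B̂ Â x̂`. So the expansion
reproduces every `x` iff multiplication by `B̂ Â` is the identity of `L²(Ĝ)^N`, i.e. iff
`B̂ Â = I` a.e. (test on constant vectors, which lie in `L²` as `Ĝ` has finite measure).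
Conversely, if `B̂ Â = I` then multiplication by `B̂`, resp. by `Âᴴ`, is a left inverse of the
analysis operator of `{T_g a*_m}`, resp. of `{T_g b_m}` (whose symbol is `B̂ᴴ`), which gives the
lower frame bounds; the upper ones come from the boundedness of `Â` and `B̂`.
-/

open scoped ComplexConjugate ENNReal Matrix
open MeasureTheory

noncomputable section

namespace GroupSampling

/-- `ℓ²(G)` with values in `ℂ`. -/
abbrev ell2 (G : Type*) := lp (fun _ : G => ℂ) 2

/-- the product Hilbert space `ℓ²_N(G) = ℓ²(G) × ⋯ × ℓ²(G)` (`N` times). -/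
abbrev ell2N (G : Type*) (N : ℕ) := PiLp 2 (fun _ : Fin N => ell2 G)

/-- `ℓ²_N(G)` is complete (its uniformity is definitionally the product uniformity). -/
instance ell2N.completeSpace {G : Type*} {N : ℕ} : CompleteSpace (ell2N G N) :=
  inferInstance

/-- the dual group `Ĝ` of the (countable discrete abelian) group `G`. -/
abbrev GDual (G : Type*) [AddCommGroup G] [TopologicalSpace G] : Type _ :=
  PontryaginDual (Multiplicative G)

variable {G : Type*} [AddCommGroup G] [Countable G] [TopologicalSpace G] [DiscreteTopology G]

/-- the pairing `⟨g, ξ⟩ ∈ 𝕋 ⊆ ℂ` between a group element and a character. -/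
def pairing (g : G) (ξ : GDual G) : ℂ := (ξ (Multiplicative.ofAdd g) : ℂ)

/-- translation `(T_g x)(h) = x(h - g)` on `ℓ²(G)`. -/
def shift (g : G) (x : ell2 G) : ell2 G :=
  ⟨fun h => x (h - g), by
    have hx : Summable fun h => ‖(x : ∀ _ : G, ℂ) h‖ ^ (2 : ℝ≥0∞).toReal :=
      (memℓp_gen_iff (by norm_num)).mp (lp.memℓp x)
    exact memℓp_gen (((Equiv.subRight g).summable_iff
      (f := fun h => ‖(x : ∀ _ : G, ℂ) h‖ ^ (2 : ℝ≥0∞).toReal)).mpr hx)⟩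

/-- componentwise translation on `ℓ²_N(G)`. -/
def shiftN {N : ℕ} (g : G) (x : ell2N G N) : ell2N G N := WithLp.toLp 2 (fun n => shift g (x n))

/-- the involution `x*(g) = conj (x(-g))` on `ℓ²(G)`. -/
def invol (x : ell2 G) : ell2 G :=
  ⟨fun g => conj ((x : ∀ _ : G, ℂ) (-g)), by
    have hx : Summable fun h => ‖(x : ∀ _ : G, ℂ) h‖ ^ (2 : ℝ≥0∞).toReal :=
      (memℓp_gen_iff (by norm_num)).mp (lp.memℓp x)
    refine memℓp_gen ?_
    have := ((Equiv.neg G).summable_iff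
      (f := fun h => ‖(x : ∀ _ : G, ℂ) h‖ ^ (2 : ℝ≥0∞).toReal)).mpr hx
    simpa [Function.comp_def] using this⟩

/-- entry `m` of the matrix convolution `A ∗ x` of `A ∈ M_{M×N}(ℓ²(G))` with `x ∈ ℓ²_N(G)`:
`(A ∗ x)_m(g) = Σ_{n=1}^N Σ_{g' ∈ G} a_{m,n}(g - g')·x_n(g')`. -/
def convEntry {N M : ℕ} (A : Fin M → Fin N → ell2 G) (x : ell2N G N) (m : Fin M) (g : G) : ℂ :=
  ∑ n, ∑' g' : G, (A m n : ∀ _ : G, ℂ) (g - g') * (x n : ∀ _ : G, ℂ) g'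

/-- spectral norm (largest singular value, i.e. Euclidean operator norm) of a complex matrix. -/
def specNorm {M N : ℕ} (B : Matrix (Fin M) (Fin N) ℂ) : ℝ :=
  ‖LinearMap.toContinuousLinearMap (Matrix.toEuclideanLin B)‖

/-- smallest eigenvalue `λ_min` of the positive semidefinite hermitian matrix `Bᴴ * B`. -/
def lamMin {M N : ℕ} (B : Matrix (Fin M) (Fin N) ℂ) : ℝ :=
  ⨅ i, (Matrix.isHermitian_conjTranspose_mul_self B).eigenvalues i

/-- largest eigenvalue `λ_max` of the positive semidefinite hermitian matrix `Bᴴ * B`. -/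
def lamMax {M N : ℕ} (B : Matrix (Fin M) (Fin N) ℂ) : ℝ :=
  ⨆ i, (Matrix.isHermitian_conjTranspose_mul_self B).eigenvalues i

/-- `v` is a Bessel sequence in `ℓ²_N(G)` with Bessel bound `β`. -/
def IsBesselFamily {N : ℕ} {ι : Type*} (v : ι → ell2N G N) (β : ℝ) : Prop :=
  ∀ f : ell2N G N,
    Summable (fun i => ‖(inner ℂ f (v i) : ℂ)‖ ^ 2) ∧
    ∑' i, ‖(inner ℂ f (v i) : ℂ)‖ ^ 2 ≤ β * ‖f‖ ^ 2

/-- `v` is a frame for `ℓ²_N(G)` with frame bounds `α`, `β`. -/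
def IsFrameFamily {N : ℕ} {ι : Type*} (v : ι → ell2N G N) (α β : ℝ) : Prop :=
  ∀ f : ell2N G N,
    Summable (fun i => ‖(inner ℂ f (v i) : ℂ)‖ ^ 2) ∧
    α * ‖f‖ ^ 2 ≤ ∑' i, ‖(inner ℂ f (v i) : ℂ)‖ ^ 2 ∧
    ∑' i, ‖(inner ℂ f (v i) : ℂ)‖ ^ 2 ≤ β * ‖f‖ ^ 2

variable [MeasurableSpace (GDual G)] [BorelSpace (GDual G)] [CompactSpace (GDual G)]

/-- `F` is the Plancherel (Fourier) unitary isomorphism `ℓ²(G) ≃ L²(Ĝ)`: a linear isometric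
bijection which on `ℓ¹ ∩ ℓ²` is given by the character sum `x̂(ξ) = Σ_{g∈G} x(g)·⟨-g,ξ⟩`. -/
def IsFourier (μ : Measure (GDual G)) (F : ell2 G ≃ₗᵢ[ℂ] Lp ℂ 2 μ) : Prop :=
  ∀ x : ell2 G, (Summable fun g => ‖(x : ∀ _ : G, ℂ) g‖) →
    (F x : GDual G → ℂ) =ᵐ[μ] fun ξ => ∑' g : G, (x : ∀ _ : G, ℂ) g * pairing (-g) ξ

end GroupSampling

open scoped InnerProductSpace

theorem HilbertBasis.hasSum_norm_inner_sq {ι 𝕜 E : Type*} [RCLike 𝕜] [NormedAddCommGroup E]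
    [InnerProductSpace 𝕜 E] (b : HilbertBasis ι 𝕜 E) (x : E) :
    HasSum (fun i => ‖⟪b i, x⟫_𝕜‖ ^ 2) (‖x‖ ^ 2) := by
  have h := b.hasSum_inner_mul_inner x x
  rw [inner_self_eq_norm_sq_to_K, ← RCLike.ofReal_pow] at h
  refine (RCLike.hasSum_ofReal 𝕜).mp (h.congr_fun fun i => ?_)
  rw [← inner_conj_symm x, RCLike.conj_mul, RCLike.ofReal_pow]

theorem hasSum_prod_of_fintype {β γ E : Type*} [Fintype β] [AddCommMonoid E]
    [TopologicalSpace E] [ContinuousAdd E] {f : β × γ → E} {g : β → E}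
    (hf : ∀ b, HasSum (fun c => f (b, c)) (g b)) :
    HasSum f (∑ b, g b) := by
  classical
  have hfiber : ∀ b, HasSum (fun p : β × γ => if p.1 = b then f p else 0) (g b) := fun b =>
    (Function.Injective.hasSum_iff (Prod.mk_right_injective b) fun p hp =>
      if_neg fun h => hp ⟨p.2, Prod.ext h.symm rfl⟩).mp ((hf b).congr_fun fun c => if_pos rfl)
  convert hasSum_sum fun b (_ : b ∈ Finset.univ) => hfiber b with p
  rw [Finset.sum_ite_eq Finset.univ, if_pos (Finset.mem_univ _)]

theorem exists_sq_bounds_of_leftInverse {𝕜 E F : Type*} [NontriviallyNormedField 𝕜]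
    [NormedAddCommGroup E] [NormedSpace 𝕜 E] [NormedAddCommGroup F] [NormedSpace 𝕜 F]
    (T : E →L[𝕜] F) (S : F →L[𝕜] E) (hST : Function.LeftInverse S T) :
    ∃ α β : ℝ, 0 < α ∧ α ≤ β ∧ ∀ x, α * ‖x‖ ^ 2 ≤ ‖T x‖ ^ 2 ∧ ‖T x‖ ^ 2 ≤ β * ‖x‖ ^ 2 := by
  -- `‖S‖` may vanish (on the zero space), hence the `+ 1`.
  refine ⟨(‖S‖ ^ 2 + 1)⁻¹, ‖T‖ ^ 2 + (‖S‖ ^ 2 + 1)⁻¹, by positivity,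
    le_add_of_nonneg_left (sq_nonneg _), fun x => ⟨?_, ?_⟩⟩
  · have hx : ‖x‖ ≤ ‖S‖ * ‖T x‖ := by simpa only [hST x] using S.le_opNorm (T x)
    rw [inv_mul_le_iff₀ (by positivity)]
    nlinarith [norm_nonneg x, mul_nonneg (norm_nonneg S) (norm_nonneg (T x))]
  · have hx : ‖T x‖ ≤ ‖T‖ * ‖x‖ := T.le_opNorm x
    have hα : 0 ≤ (‖S‖ ^ 2 + 1)⁻¹ := by positivity
    nlinarith [norm_nonneg (T x), sq_nonneg ‖x‖]

namespace MeasureTheory.L2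

variable {α : Type*} [MeasurableSpace α] {μ : Measure α}

def mulOp {φ : α → ℂ} (hφ : MemLp φ ∞ μ) : Lp ℂ 2 μ →L[ℂ] Lp ℂ 2 μ :=
  (ContinuousLinearMap.mul ℂ ℂ).holderL μ ∞ 2 2 (hφ.toLp φ)

lemma mulOp_coeFn {φ : α → ℂ} (hφ : MemLp φ ∞ μ) (f : Lp ℂ 2 μ) :
    mulOp hφ f =ᵐ[μ] fun x => φ x * f x := by
  filter_upwards [(ContinuousLinearMap.mul ℂ ℂ).coeFn_holder (r := 2) (hφ.toLp φ) f,
    hφ.coeFn_toLp] with x h1 h2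
  rw [mulOp, ContinuousLinearMap.holderL_apply_apply, h1, h2]
  rfl

lemma inner_mulOp_star_left {φ : α → ℂ} (hφ : MemLp φ ∞ μ) (u v : Lp ℂ 2 μ) :
    ⟪mulOp hφ.star u, v⟫_ℂ = ⟪u, mulOp hφ v⟫_ℂ := by
  simp only [L2.inner_def]
  refine integral_congr_ae ?_
  filter_upwards [mulOp_coeFn hφ.star u, mulOp_coeFn hφ v] with x hu hv
  simp only [hu, hv, Pi.star_apply, RCLike.inner_apply, map_mul, RCLike.star_def,
    RCLike.conj_conj]
  ring

variable {ι κ ν : Type*} [Fintype κ]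

def matrixMulOp (Φ : α → Matrix ι κ ℂ) (hΦ : ∀ i j, MemLp (fun x => Φ x i j) ∞ μ) :
    PiLp 2 (fun _ : κ => Lp ℂ 2 μ) →L[ℂ] PiLp 2 (fun _ : ι => Lp ℂ 2 μ) :=
  (PiLp.continuousLinearEquiv 2 ℂ _).symm.toContinuousLinearMap.comp <|
    ContinuousLinearMap.pi fun i => ∑ j, (mulOp (hΦ i j)).comp (PiLp.proj 2 _ j)

variable {Φ : α → Matrix ι κ ℂ} {hΦ : ∀ i j, MemLp (fun x => Φ x i j) ∞ μ}

lemma matrixMulOp_apply (X : PiLp 2 (fun _ : κ => Lp ℂ 2 μ)) (i : ι) :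
    matrixMulOp Φ hΦ X i = ∑ j, mulOp (hΦ i j) (X j) := by
  simp [matrixMulOp]

lemma matrixMulOp_coeFn (X : PiLp 2 (fun _ : κ => Lp ℂ 2 μ)) (i : ι) :
    matrixMulOp Φ hΦ X i =ᵐ[μ] fun x => (Φ x *ᵥ fun j => X j x) i := by
  rw [matrixMulOp_apply]
  filter_upwards [Lp.coeFn_fun_finsetSum Finset.univ fun j => mulOp (hΦ i j) (X j),
    ae_all_iff.mpr fun j => mulOp_coeFn (hΦ i j) (X j)] with x hsum hmul
  simp only [hsum, hmul, Matrix.mulVec, dotProduct]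

lemma matrixMulOp_matrixMulOp_coeFn [Fintype ν] {Ψ : α → Matrix κ ν ℂ}
    {hΨ : ∀ j k, MemLp (fun x => Ψ x j k) ∞ μ} (X : PiLp 2 (fun _ : ν => Lp ℂ 2 μ)) (i : ι) :
    matrixMulOp Φ hΦ (matrixMulOp Ψ hΨ X) i =ᵐ[μ]
      fun x => ((Φ x * Ψ x) *ᵥ fun k => X k x) i := by
  filter_upwards [matrixMulOp_coeFn (matrixMulOp Ψ hΨ X) i,
    ae_all_iff.mpr fun j => matrixMulOp_coeFn (hΦ := hΨ) X j] with x h1 h2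
  rw [h1, ← Matrix.mulVec_mulVec, funext h2]

variable [Fintype ι] [DecidableEq ι] {Ψ : α → Matrix κ ι ℂ}
  {hΨ : ∀ j k, MemLp (fun x => Ψ x j k) ∞ μ}

lemma matrixMulOp_matrixMulOp_of_ae_mul_eq_one (h : ∀ᵐ x ∂μ, Φ x * Ψ x = 1)
    (X : PiLp 2 (fun _ : ι => Lp ℂ 2 μ)) :
    matrixMulOp Φ hΦ (matrixMulOp Ψ hΨ X) = X := by
  ext1 i
  refine Lp.ext ?_
  filter_upwards [matrixMulOp_matrixMulOp_coeFn (hΦ := hΦ) (hΨ := hΨ) X i, h] with x h1 h2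
  rw [h1, h2, Matrix.one_mulVec]

lemma ae_mul_eq_one_of_matrixMulOp_matrixMulOp [IsFiniteMeasure μ]
    (h : ∀ X, matrixMulOp Φ hΦ (matrixMulOp Ψ hΨ X) = X) :
    ∀ᵐ x ∂μ, Φ x * Ψ x = 1 := by
  -- test the identity on the constant unit vectors, which are in `L²` since `μ` is finite
  let e : ι → PiLp 2 (fun _ : ι => Lp ℂ 2 μ) := fun k =>
    WithLp.toLp 2 (Pi.single k ((memLp_const (1 : ℂ)).toLp _))
  have he : ∀ k l, e k l =ᵐ[μ] fun _ => (Pi.single k 1 : ι → ℂ) l := by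
    intro k l
    rcases eq_or_ne l k with rfl | hlk
    · simp only [e, Pi.single_eq_same]
      exact (memLp_const (1 : ℂ)).coeFn_toLp
    · simp only [e, Pi.single_eq_of_ne hlk]
      exact Lp.coeFn_zero ℂ 2 μ
  have hentry : ∀ i k, ∀ᵐ x ∂μ, (Φ x * Ψ x) i k = (1 : Matrix ι ι ℂ) i k := by
    intro i k
    filter_upwards [matrixMulOp_matrixMulOp_coeFn (hΦ := hΦ) (hΨ := hΨ) (e k) i,
      ae_all_iff.mpr (he k)] with x h1 h2
    rw [h (e k), h2, funext h2, Matrix.mulVec_single_one] at h1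
    simpa [Matrix.one_apply, Pi.single_apply] using h1.symm
  filter_upwards [ae_all_iff.mpr fun i => ae_all_iff.mpr (hentry i)] with x hx
  exact Matrix.ext hx

end MeasureTheory.L2

namespace GroupSampling

open L2

theorem ell2_ext_single {ι E : Type*} [DecidableEq ι] [AddCommMonoid E] [Module ℂ E]
    [TopologicalSpace E] [T2Space E] {σ : ℂ →+* ℂ} {T₁ T₂ : ell2 ι →SL[σ] E}
    (h : ∀ i c, T₁ (lp.single 2 i c) = T₂ (lp.single 2 i c)) : T₁ = T₂ := by
  ext y
  have hy := lp.hasSum_single (by norm_num) y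
  exact (hy.mapL T₁).unique ((hy.mapL T₂).congr_fun fun i => h i (y i))

section Translation

variable {G : Type*} [AddCommGroup G]

lemma norm_shift (g : G) (x : ell2 G) : ‖shift g x‖ = ‖x‖ := by
  simp only [lp.norm_eq_tsum_rpow (by norm_num : 0 < (2 : ℝ≥0∞).toReal)]
  congr 1
  exact (Equiv.subRight g).tsum_eq fun h => ‖x h‖ ^ (2 : ℝ≥0∞).toReal

lemma norm_invol (x : ell2 G) : ‖invol x‖ = ‖x‖ := by
  simp only [lp.norm_eq_tsum_rpow (by norm_num : 0 < (2 : ℝ≥0∞).toReal)]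
  congr 1
  simpa [invol] using (Equiv.neg G).tsum_eq fun h => ‖x h‖ ^ (2 : ℝ≥0∞).toReal

def shiftCLM (g : G) : ell2 G →L[ℂ] ell2 G :=
  LinearMap.mkContinuous
    { toFun := shift g
      map_add' := fun _ _ => rfl
      map_smul' := fun _ _ => rfl }
    1 fun x => by rw [one_mul]; exact (norm_shift g x).le

def involCLM : ell2 G →L⋆[ℂ] ell2 G :=
  LinearMap.mkContinuous
    { toFun := invol
      map_add' := fun _ _ => by ext; simp [invol]; rfl
      map_smul' := fun _ _ => by ext; simp [invol] }
    1 fun x => by rw [one_mul]; exact (norm_invol x).le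

lemma shiftCLM_apply (g : G) (x : ell2 G) : shiftCLM g x = shift g x := rfl

lemma involCLM_apply (x : ell2 G) : involCLM x = invol x := rfl

variable [DecidableEq G]

lemma shift_single (g h : G) (c : ℂ) : shift g (lp.single 2 h c) = lp.single 2 (h + g) c := by
  ext k
  simp [shift, Pi.single_apply, sub_eq_iff_eq_add]

lemma invol_single (h : G) (c : ℂ) : invol (lp.single 2 h c) = lp.single 2 (-h) (conj c) := by
  ext k
  simp [invol, Pi.single_apply, neg_eq_iff_eq_neg, apply_ite (starRingEnd ℂ)]

end Translation

section Fourier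

variable {G : Type*} [AddCommGroup G] [TopologicalSpace G]

lemma norm_pairing (g : G) (ξ : GDual G) : ‖pairing g ξ‖ = 1 := by
  simp [pairing, Circle.norm_coe]

lemma pairing_add (g h : G) (ξ : GDual G) : pairing (g + h) ξ = pairing g ξ * pairing h ξ := by
  simp [pairing, ofAdd_add]

lemma pairing_neg (g : G) (ξ : GDual G) : pairing (-g) ξ = conj (pairing g ξ) := by
  simp [pairing, ofAdd_neg, ← Circle.coe_inv_eq_conj]

lemma continuous_pairing (g : G) : Continuous (pairing (G := G) g) :=
  have h : Continuous fun f : C(Multiplicative G, Circle) => f (Multiplicative.ofAdd g) :=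
    continuous_eval_const _
  continuous_subtype_val.comp <|
    h.comp (ContinuousMonoidHom.isInducing_toContinuousMap (Multiplicative G) Circle).continuous

variable [MeasurableSpace (GDual G)]

lemma memLp_pairing [OpensMeasurableSpace (GDual G)] (μ : Measure (GDual G)) (g : G) :
    MemLp (pairing g) ∞ μ :=
  memLp_top_of_bound (continuous_pairing g).aestronglyMeasurable 1
    (.of_forall fun ξ => (norm_pairing g ξ).le)

variable {μ : Measure (GDual G)} (F : ell2 G ≃ₗᵢ[ℂ] Lp ℂ 2 μ)

def fourierBasis : HilbertBasis G ℂ (Lp ℂ 2 μ) := HilbertBasis.ofRepr F.symm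

lemma fourierBasis_apply [DecidableEq G] (g : G) : fourierBasis F g = F (lp.single 2 g 1) := by
  rw [← HilbertBasis.repr_symm_single]
  rfl

variable (N : ℕ) in
def fourierN : ell2N G N ≃ₗᵢ[ℂ] PiLp 2 (fun _ : Fin N => Lp ℂ 2 μ) :=
  LinearIsometryEquiv.piLpCongrRight 2 fun _ => F

lemma fourierN_apply {N : ℕ} (x : ell2N G N) (n : Fin N) : fourierN F N x n = F (x n) := rfl

variable {F} (hF : IsFourier μ F)
include hF

lemma fourier_single [DecidableEq G] (g : G) (c : ℂ) :
    F (lp.single 2 g c) =ᵐ[μ] fun ξ => c * pairing (-g) ξ := by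
  have hsum : Summable fun h => ‖(lp.single 2 g c : ell2 G) h‖ :=
    summable_of_ne_finset_zero (s := {g}) fun h hh => by simp_all
  filter_upwards [hF _ hsum] with ξ hξ
  rw [hξ, tsum_eq_single g fun h hh => by simp [hh]]
  simp

lemma fourier_invol (y : ell2 G) : F (invol y) =ᵐ[μ] fun ξ => conj (F y ξ) := by
  classical
  let conjL := ((starL ℂ : ℂ ≃L⋆[ℂ] ℂ) : ℂ →L⋆[ℂ] ℂ).compLpL 2 μ
  have h : F.toLinearIsometry.toContinuousLinearMap.comp involCLM
      = conjL.comp F.toLinearIsometry.toContinuousLinearMap := by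
    refine ell2_ext_single fun h c => Lp.ext ?_
    simp only [ContinuousLinearMap.comp_apply, LinearIsometry.coe_toContinuousLinearMap,
      LinearIsometryEquiv.coe_toLinearIsometry, involCLM_apply, invol_single]
    filter_upwards [fourier_single hF (-h) (conj c), fourier_single hF h c,
      ContinuousLinearMap.coeFn_compLpL (p := 2) (μ := μ)
        ((starL ℂ : ℂ ≃L⋆[ℂ] ℂ) : ℂ →L⋆[ℂ] ℂ) (F (lp.single 2 h c))] with ξ h1 h2 h3
    rw [h1, h3, h2, neg_neg, pairing_neg]
    simp
  rw [show F (invol y) = conjL (F y) from DFunLike.congr_fun h y]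
  exact ContinuousLinearMap.coeFn_compLpL _ _

variable [OpensMeasurableSpace (GDual G)]

lemma fourier_shift (g : G) (y : ell2 G) :
    F (shift g y) = mulOp (memLp_pairing μ (-g)) (F y) := by
  classical
  have h : F.toLinearIsometry.toContinuousLinearMap.comp (shiftCLM g)
      = (mulOp (memLp_pairing μ (-g))).comp F.toLinearIsometry.toContinuousLinearMap := by
    refine ell2_ext_single fun h c => Lp.ext ?_
    simp only [ContinuousLinearMap.comp_apply, LinearIsometry.coe_toContinuousLinearMap,
      LinearIsometryEquiv.coe_toLinearIsometry, shiftCLM_apply, shift_single]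
    filter_upwards [fourier_single hF (h + g) c, fourier_single hF h c,
      mulOp_coeFn (memLp_pairing μ (-g)) (F (lp.single 2 h c))] with ξ h1 h2 h3
    rw [h1, h3, h2, neg_add, pairing_add]
    ring
  exact DFunLike.congr_fun h y

lemma fourier_shift_eq_mulOp {φ : GDual G → ℂ} (hφ : MemLp φ ∞ μ) {y : ell2 G}
    (hy : F y =ᵐ[μ] φ) (g : G) : F (shift g y) = mulOp hφ (fourierBasis F g) := by
  classical
  refine (fourier_shift hF g y).trans (Lp.ext ?_)
  filter_upwards [mulOp_coeFn (memLp_pairing μ (-g)) (F y), mulOp_coeFn hφ (fourierBasis F g),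
    hy, fourier_single hF g 1] with ξ h1 h2 h3 h4
  rw [h1, h2, h3, fourierBasis_apply, h4, one_mul, mul_comm]

end Fourier

section Frames

variable {G : Type*} [AddCommGroup G] [TopologicalSpace G]
  [MeasurableSpace (GDual G)] [OpensMeasurableSpace (GDual G)]
  {μ : Measure (GDual G)} {F : ell2 G ≃ₗᵢ[ℂ] Lp ℂ 2 μ} (hF : IsFourier μ F)
  {ι : Type*} {N : ℕ} {C : ι → Fin N → ell2 G} {Ψ : GDual G → Matrix ι (Fin N) ℂ}
  (hΨ : ∀ m n, MemLp (fun ξ => Ψ ξ m n) ∞ μ)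
include hF

-- `Ψ` is the symbol of the analysis operator of `{T_g C m}`; the `star` in `hC` is there
-- because the inner product is conjugate-linear in its first argument.
lemma inner_shiftN_eq_inner_fourierBasis
    (hC : ∀ m n, F (C m n) =ᵐ[μ] fun ξ => star (Ψ ξ m n)) (x : ell2N G N) (m : ι) (g : G) :
    ⟪shiftN g (WithLp.toLp 2 (C m)), x⟫_ℂ
      = ⟪fourierBasis F g, matrixMulOp Ψ hΨ (fourierN F N x) m⟫_ℂ := by
  simp only [PiLp.inner_apply, matrixMulOp_apply, inner_sum, fourierN_apply]
  refine Finset.sum_congr rfl fun n _ => ?_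
  rw [← F.inner_map_map, shiftN, fourier_shift_eq_mulOp hF (hΨ m n).star (hC m n),
    inner_mulOp_star_left]

variable [Fintype ι]

lemma hasSum_norm_inner_shiftN_sq (hC : ∀ m n, F (C m n) =ᵐ[μ] fun ξ => star (Ψ ξ m n))
    (x : ell2N G N) :
    HasSum (fun p : ι × G => ‖⟪x, shiftN p.2 (WithLp.toLp 2 (C p.1))⟫_ℂ‖ ^ 2)
      (‖matrixMulOp Ψ hΨ (fourierN F N x)‖ ^ 2) := by
  set Y := matrixMulOp Ψ hΨ (fourierN F N x)
  have hparseval : ∀ m, HasSum (fun g => ‖⟪fourierBasis F g, Y m⟫_ℂ‖ ^ 2) (‖Y m‖ ^ 2) :=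
    fun m => (fourierBasis F).hasSum_norm_inner_sq (Y m)
  rw [PiLp.norm_sq_eq_of_L2]
  refine (hasSum_prod_of_fintype
    (f := fun p : ι × G => ‖⟪fourierBasis F p.2, Y p.1⟫_ℂ‖ ^ 2) hparseval).congr_fun fun p => ?_
  rw [norm_inner_symm, inner_shiftN_eq_inner_fourierBasis hF hΨ hC]

lemma exists_isFrameFamily_of_leftInverse
    (hC : ∀ m n, F (C m n) =ᵐ[μ] fun ξ => star (Ψ ξ m n))
    (S : PiLp 2 (fun _ : ι => Lp ℂ 2 μ) →L[ℂ] PiLp 2 (fun _ : Fin N => Lp ℂ 2 μ))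
    (hS : Function.LeftInverse S (matrixMulOp Ψ hΨ)) :
    ∃ α β : ℝ, 0 < α ∧ α ≤ β ∧
      IsFrameFamily (fun p : ι × G => shiftN p.2 (WithLp.toLp 2 (C p.1))) α β := by
  obtain ⟨α, β, hα, hαβ, hbounds⟩ := exists_sq_bounds_of_leftInverse
    ((matrixMulOp Ψ hΨ).comp (fourierN F N).toLinearIsometry.toContinuousLinearMap)
    ((fourierN F N).symm.toLinearIsometry.toContinuousLinearMap.comp S) fun x => by simp [hS _]
  refine ⟨α, β, hα, hαβ, fun x => ?_⟩
  have hx := hasSum_norm_inner_shiftN_sq hF hΨ hC x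
  simp only [ContinuousLinearMap.comp_apply, LinearIsometry.coe_toContinuousLinearMap,
    LinearIsometryEquiv.coe_toLinearIsometry] at hbounds
  exact ⟨hx.summable, hx.tsum_eq ▸ hbounds x⟩

variable {B : Fin N → ι → ell2 G} {Φ : GDual G → Matrix (Fin N) ι ℂ}
  (hΦ : ∀ n m, MemLp (fun ξ => Φ ξ n m) ∞ μ)

lemma hasSum_fourierN_synthesis (hB : ∀ n m, F (B n m) =ᵐ[μ] fun ξ => Φ ξ n m)
    (Y : PiLp 2 (fun _ : ι => Lp ℂ 2 μ)) :
    HasSum (fun p : ι × G => ⟪fourierBasis F p.2, Y p.1⟫_ℂ •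
        fourierN F N (shiftN p.2 (WithLp.toLp 2 fun n => B n p.1)))
      (matrixMulOp Φ hΦ Y) := by
  have hcolumn : ∀ m, HasSum (fun g => ⟪fourierBasis F g, Y m⟫_ℂ •
      fourierN F N (shiftN g (WithLp.toLp 2 fun n => B n m)))
      (WithLp.toLp 2 fun n => mulOp (hΦ n m) (Y m)) := by
    intro m
    refine (PiLp.continuousLinearEquiv 2 ℂ _).hasSum.mp (Pi.hasSum.mpr fun n => ?_)
    refine (((fourierBasis F).hasSum_repr (Y m)).mapL (mulOp (hΦ n m))).congr_fun fun g => ?_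
    simp [fourierN_apply, shiftN, fourier_shift_eq_mulOp hF (hΦ n m) (hB n m),
      HilbertBasis.repr_apply_apply]
  convert hasSum_prod_of_fintype (f := fun p : ι × G => ⟪fourierBasis F p.2, Y p.1⟫_ℂ •
    fourierN F N (shiftN p.2 (WithLp.toLp 2 fun n => B n p.1))) hcolumn
  ext n
  simp [matrixMulOp_apply]

lemma hasSum_dual_expansion (hC : ∀ m n, F (C m n) =ᵐ[μ] fun ξ => star (Ψ ξ m n))
    (hB : ∀ n m, F (B n m) =ᵐ[μ] fun ξ => Φ ξ n m) (x : ell2N G N) :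
    HasSum (fun p : ι × G => ⟪shiftN p.2 (WithLp.toLp 2 (C p.1)), x⟫_ℂ •
        shiftN p.2 (WithLp.toLp 2 fun n => B n p.1))
      ((fourierN F N).symm (matrixMulOp Φ hΦ (matrixMulOp Ψ hΨ (fourierN F N x)))) := by
  refine ((hasSum_fourierN_synthesis hF hΦ hB (matrixMulOp Ψ hΨ (fourierN F N x))).mapL
    (fourierN F N).symm.toLinearIsometry.toContinuousLinearMap).congr_fun fun p => ?_
  simp [inner_shiftN_eq_inner_fourierBasis hF hΨ hC]

lemma hasSum_dual_expansion_iff (hC : ∀ m n, F (C m n) =ᵐ[μ] fun ξ => star (Ψ ξ m n))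
    (hB : ∀ n m, F (B n m) =ᵐ[μ] fun ξ => Φ ξ n m) :
    (∀ x : ell2N G N, HasSum (fun p : ι × G => ⟪shiftN p.2 (WithLp.toLp 2 (C p.1)), x⟫_ℂ •
        shiftN p.2 (WithLp.toLp 2 fun n => B n p.1)) x) ↔
      ∀ X, matrixMulOp Φ hΦ (matrixMulOp Ψ hΨ X) = X := by
  constructor
  · intro h X
    obtain ⟨x, rfl⟩ := (fourierN F N).surjective X
    exact (fourierN F N).symm_apply_eq.mp
      ((hasSum_dual_expansion hF hΨ hΦ hC hB x).unique (h x))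
  · intro h x
    simpa [h] using hasSum_dual_expansion hF hΨ hΦ hC hB x

end Frames

end GroupSampling

namespace GroupSampling

variable {G : Type*} [AddCommGroup G] [Countable G] [TopologicalSpace G] [DiscreteTopology G]

variable [MeasurableSpace (GDual G)] [BorelSpace (GDual G)] [CompactSpace (GDual G)]

theorem statement11_general
    (μ : Measure (GDual G)) [IsProbabilityMeasure μ]
    (F : ell2 G ≃ₗᵢ[ℂ] Lp ℂ 2 μ) (hF : IsFourier μ F)
    {M N : ℕ}
    (A : Fin M → Fin N → ell2 G)
    (Ahat : GDual G → Matrix (Fin M) (Fin N) ℂ)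
    (hAhat : ∀ m n, (fun ξ => Ahat ξ m n) =ᵐ[μ] ⇑(F (A m n)))
    (hAbd : ∀ m n, MemLp (fun ξ => Ahat ξ m n) ∞ μ)
    (B : Fin N → Fin M → ell2 G)
    (Bhat : GDual G → Matrix (Fin N) (Fin M) ℂ)
    (hBhat : ∀ n m, (fun ξ => Bhat ξ n m) =ᵐ[μ] ⇑(F (B n m)))
    (hBbd : ∀ n m, MemLp (fun ξ => Bhat ξ n m) ∞ μ) :
    ((∃ α β : ℝ, 0 < α ∧ α ≤ β ∧
        IsFrameFamily (fun p : Fin M × G => shiftN p.2 (WithLp.toLp 2 (fun n => invol (A p.1 n)))) α β) ∧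
     (∃ α β : ℝ, 0 < α ∧ α ≤ β ∧
        IsFrameFamily (fun p : Fin M × G => shiftN p.2 (WithLp.toLp 2 (fun n => B n p.1))) α β) ∧
     (∀ x : ell2N G N, HasSum
        (fun p : Fin M × G =>
          (inner ℂ (shiftN p.2 (WithLp.toLp 2 (fun n => invol (A p.1 n)))) x : ℂ) • shiftN p.2 (WithLp.toLp 2 (fun n => B n p.1)))
        x))
      ↔ ∀ᵐ ξ ∂μ, Bhat ξ * Ahat ξ = 1 := by
  have hAHbd : ∀ n m, MemLp (fun ξ => (Ahat ξ)ᴴ n m) ∞ μ := fun n m => (hAbd m n).star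
  have hBHbd : ∀ m n, MemLp (fun ξ => (Bhat ξ)ᴴ m n) ∞ μ := fun m n => (hBbd n m).star
  have hA : ∀ m n, F (invol (A m n)) =ᵐ[μ] fun ξ => star (Ahat ξ m n) := fun m n => by
    filter_upwards [fourier_invol hF (A m n), hAhat m n] with ξ h1 h2
    rw [h1, ← h2]
    rfl
  have hB : ∀ m n, F (B n m) =ᵐ[μ] fun ξ => star ((Bhat ξ)ᴴ m n) := fun m n => by
    filter_upwards [hBhat n m] with ξ h
    simp [h]
  have hdual := hasSum_dual_expansion_iff (C := fun m n => invol (A m n)) hF hAbd hBbd hA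
    fun n m => (hBhat n m).symm
  constructor
  · rintro ⟨-, -, hsum⟩
    exact L2.ae_mul_eq_one_of_matrixMulOp_matrixMulOp (hdual.mp hsum)
  · intro hBA
    have hAHBH : ∀ᵐ ξ ∂μ, (Ahat ξ)ᴴ * (Bhat ξ)ᴴ = 1 := hBA.mono fun ξ hξ => by
      rw [← Matrix.conjTranspose_mul, hξ, Matrix.conjTranspose_one]
    refine ⟨?_, ?_, hdual.mpr (L2.matrixMulOp_matrixMulOp_of_ae_mul_eq_one hBA)⟩
    · exact exists_isFrameFamily_of_leftInverse (C := fun m n => invol (A m n)) hF hAbd hA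
        (L2.matrixMulOp Bhat hBbd) (L2.matrixMulOp_matrixMulOp_of_ae_mul_eq_one hBA)
    · exact exists_isFrameFamily_of_leftInverse (C := fun m n => B n m) hF hBHbd hB
        (L2.matrixMulOp _ hAHbd) (L2.matrixMulOp_matrixMulOp_of_ae_mul_eq_one hAHBH)

/-- The sequences `{T_g a*_m}` and `{T_g b_m}` form a pair of dual frames for
`ℓ²_N(G)` iff `B̂(ξ)Â(ξ) = I_N` for a.e. `ξ ∈ Ĝ`. -/
theorem statement11
    (μ : Measure (GDual G)) [IsProbabilityMeasure μ] [μ.IsHaarMeasure]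
    (F : ell2 G ≃ₗᵢ[ℂ] Lp ℂ 2 μ) (hF : IsFourier μ F)
    {M N : ℕ}
    (A : Fin M → Fin N → ell2 G)
    (Ahat : GDual G → Matrix (Fin M) (Fin N) ℂ)
    (hAhat : ∀ m n, (fun ξ => Ahat ξ m n) =ᵐ[μ] ⇑(F (A m n)))
    (hAbd : ∀ m n, MemLp (fun ξ => Ahat ξ m n) ∞ μ)
    (B : Fin N → Fin M → ell2 G)
    (Bhat : GDual G → Matrix (Fin N) (Fin M) ℂ)
    (hBhat : ∀ n m, (fun ξ => Bhat ξ n m) =ᵐ[μ] ⇑(F (B n m)))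
    (hBbd : ∀ n m, MemLp (fun ξ => Bhat ξ n m) ∞ μ) :
    ((∃ α β : ℝ, 0 < α ∧ α ≤ β ∧
        IsFrameFamily (fun p : Fin M × G => shiftN p.2 (WithLp.toLp 2 (fun n => invol (A p.1 n)))) α β) ∧
     (∃ α β : ℝ, 0 < α ∧ α ≤ β ∧
        IsFrameFamily (fun p : Fin M × G => shiftN p.2 (WithLp.toLp 2 (fun n => B n p.1))) α β) ∧
     (∀ x : ell2N G N, HasSum
        (fun p : Fin M × G =>
          (inner ℂ (shiftN p.2 (WithLp.toLp 2 (fun n => invol (A p.1 n)))) x : ℂ) • shiftN p.2 (WithLp.toLp 2 (fun n => B n p.1)))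
        x))
      ↔ ∀ᵐ ξ ∂μ, Bhat ξ * Ahat ξ = 1 :=
  statement11_general μ F hF A Ahat hAhat hAbd B Bhat hBhat hBbd

end GroupSampling
end
end

section
/- Let G be a countable discrete subgroup of a locally compact abelian group G̃, let t ↦ U(t) be a unitary representation of G̃ on L²(G̃), and let φ_1,…,φ_N ∈ L²(G̃). Then the following are equivalent: (i) for every coefficient family {x_n(g)}_{g∈G, n=1,…,N} ∈ ℓ²_N(G), the series Σ_{n=1}^N Σ_{g∈G} x_n(g)·[U(g)φ_n](t) converges pointwise to a continuous bounded function on G̃; (ii) for each g ∈ G and n = 1,…,N the function U(g)φ_n is continuous on G̃, and sup_{t∈G̃} Σ_{g∈G} |[U(g)φ_n](t)|² < +∞ for each n = 1,…,N. -/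
open scoped ComplexConjugate ENNReal Matrix
open MeasureTheory

noncomputable section

namespace GroupSampling

variable {G : Type*} [AddCommGroup G] [Countable G] [TopologicalSpace G] [DiscreteTopology G]

variable [MeasurableSpace (GDual G)] [BorelSpace (GDual G)] [CompactSpace (GDual G)]

/-! Flattening `ℓ²_N(G)` to `ℓ²(Fin N × G)`, the series at `t` pairs `x` with the kernel
`a_t = (rep g n t)_{(n, g)}`. If every such series converges, Landau's theorem puts each `a_t` in
`ℓ²`, and Banach–Steinhaus, applied to the functionals `x ↦ Σ x·a_t` (bounded in `t` for each
fixed `x`), bounds `‖a_t‖` uniformly; testing on unit vectors gives continuity of each `rep g n`.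
Conversely, under a uniform bound on `‖a_t‖`, the sums for finitely supported truncations of `x`
converge to the sum for `x` uniformly in `t`, so the latter is continuous. -/

open scoped InnerProductSpace Topology

theorem tendstoUniformly_apply_of_norm_le {X α 𝕜 E F : Type*} [NontriviallyNormedField 𝕜]
    [SeminormedAddCommGroup E] [SeminormedAddCommGroup F] [NormedSpace 𝕜 E] [NormedSpace 𝕜 F]
    {T : X → E →L[𝕜] F} {C : ℝ} (hT : ∀ t, ‖T t‖ ≤ C) {l : Filter α} {y : α → E} {x : E}
    (hy : Filter.Tendsto y l (𝓝 x)) :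
    TendstoUniformly (fun n t => T t (y n)) (fun t => T t x) l := by
  rw [Metric.tendstoUniformly_iff]
  intro ε hε
  filter_upwards [Metric.tendsto_nhds.mp hy (ε / (max C 0 + 1)) (by positivity)] with n hn t
  rw [dist_eq_norm, ← map_sub]
  calc ‖T t (x - y n)‖ ≤ (max C 0 + 1) * ‖x - y n‖ :=
        (T t).le_of_opNorm_le (by linarith [hT t, le_max_left C 0]) _
    _ < (max C 0 + 1) * (ε / (max C 0 + 1)) := by
        gcongr
        rwa [← dist_eq_norm, dist_comm]
    _ = ε := by field_simp

theorem iSup_tsum_prod_lt_top_iff {X ι κ : Type*} [Fintype ι] (F : X → ι × κ → ℝ≥0∞) :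
    (⨆ t, ∑' p, F t p) < ⊤ ↔ ∀ i, (⨆ t, ∑' k, F t (i, k)) < ⊤ := by
  simp_rw [ENNReal.tsum_prod', tsum_fintype]
  constructor
  · intro h i
    exact (iSup_mono fun t =>
      Finset.single_le_sum (fun _ _ => bot_le) (Finset.mem_univ i)).trans_lt h
  · intro h
    refine (iSup_le fun t => Finset.sum_le_sum fun i _ =>
      le_iSup (fun t => ∑' k, F t (i, k)) t).trans_lt ?_
    exact ENNReal.sum_lt_top.mpr fun i _ => h i

section ell2

variable {ι : Type*}

theorem memℓp_two_iff_tsum_nnnorm_sq_lt_top {E : Type*} [NormedAddCommGroup E] {f : ι → E} :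
    Memℓp f 2 ↔ ∑' i, (‖f i‖₊ : ℝ≥0∞) ^ 2 < ⊤ := by
  simp_rw [memℓp_gen_iff (by norm_num : 0 < (2 : ℝ≥0∞).toReal), lt_top_iff_ne_top,
    ← ENNReal.coe_pow, ENNReal.tsum_coe_ne_top_iff_summable, ← NNReal.summable_coe]
  simp

theorem memℓp_two_prod_iff {κ E : Type*} [Fintype ι] [NormedAddCommGroup E] {f : ι × κ → E} :
    Memℓp f 2 ↔ ∀ i, Memℓp (fun k => f (i, k)) 2 := by
  simp_rw [memℓp_two_iff_tsum_nnnorm_sq_lt_top, ENNReal.tsum_prod', tsum_fintype]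
  simp

theorem ell2.tsum_nnnorm_sq (x : ell2 ι) : ∑' i, (‖x i‖₊ : ℝ≥0∞) ^ 2 = (‖x‖₊ : ℝ≥0∞) ^ 2 := by
  have hx : ∑' i, (‖x i‖₊ : ℝ≥0∞) ^ 2 ≠ ⊤ :=
    (memℓp_two_iff_tsum_nnnorm_sq_lt_top.mp (lp.memℓp x)).ne
  simp_rw [← ENNReal.coe_pow] at hx ⊢
  rw [← ENNReal.coe_tsum (ENNReal.tsum_coe_ne_top_iff_summable.mp hx), ENNReal.coe_inj,
    ← NNReal.coe_inj]
  push_cast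
  simpa using (lp.norm_rpow_eq_tsum (p := 2) (by norm_num) x).symm

theorem ell2.hasSum_mul (a x : ell2 ι) : HasSum (fun i => x i * a i) ⟪star a, x⟫_ℂ := by
  simpa [lp.star_apply, mul_comm] using lp.hasSum_inner (𝕜 := ℂ) (star a) x

theorem ell2.inner_star_single [DecidableEq ι] (a : ell2 ι) (i : ι) (c : ℂ) :
    ⟪star a, lp.single 2 i c⟫_ℂ = c * a i := by
  simp [lp.inner_single_right, lp.star_apply]

theorem ell2.norm_sum_single_sq [DecidableEq ι] (x : ι → ℂ) (F : Finset ι) :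
    ‖∑ i ∈ F, lp.single 2 i (x i)‖ ^ 2 = ∑ i ∈ F, ‖x i‖ ^ 2 := by
  simpa using lp.norm_sum_single (p := 2) (by norm_num) x F

/-- Landau's theorem, by Banach–Steinhaus for the functionals given by the truncations of `a`. -/
theorem memℓp_two_of_forall_summable_mul {a : ι → ℂ}
    (h : ∀ x : ell2 ι, Summable fun i => x i * a i) : Memℓp a 2 := by
  classical
  let v : Finset ι → ell2 ι := fun F => ∑ i ∈ F, lp.single 2 i (conj (a i))
  have hv : ∀ F x, innerSL ℂ (v F) x = ∑ i ∈ F, x i * a i := fun F x => by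
    simp [v, lp.inner_single_left, mul_comm]
  obtain ⟨C, hC⟩ : ∃ C, ∀ F, ‖innerSL ℂ (v F)‖ ≤ C := by
    refine banach_steinhaus fun x => ⟨∑' i, ‖x i * a i‖, fun F => ?_⟩
    rw [hv]
    exact (norm_sum_le _ _).trans ((h x).norm.sum_le_tsum F fun i _ => norm_nonneg _)
  refine memℓp_gen_iff (by norm_num) |>.mpr ?_
  simp only [ENNReal.toReal_ofNat, Real.rpow_two]
  refine summable_of_sum_le (fun i => sq_nonneg _) (c := C ^ 2) fun F => ?_
  calc ∑ i ∈ F, ‖a i‖ ^ 2 = ‖v F‖ ^ 2 := by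
        simpa using (ell2.norm_sum_single_sq (fun i => conj (a i)) F).symm
    _ ≤ C ^ 2 := by
        gcongr
        simpa using hC F

section Kernel

variable {X : Type*}

theorem ell2.iSup_tsum_nnnorm_sq_lt_top_iff (A : X → ell2 ι) :
    (⨆ t, ∑' i, (‖A t i‖₊ : ℝ≥0∞) ^ 2) < ⊤ ↔ ∃ C, ∀ t, ‖A t‖ ≤ C := by
  simp_rw [ell2.tsum_nnnorm_sq]
  constructor
  · intro h
    refine ⟨(⨆ t, (‖A t‖₊ : ℝ≥0∞) ^ 2).toReal.sqrt, fun t => Real.le_sqrt_of_sq_le ?_⟩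
    simpa using ENNReal.toReal_mono h.ne (le_iSup (fun t => (‖A t‖₊ : ℝ≥0∞) ^ 2) t)
  · rintro ⟨C, hC⟩
    calc (⨆ t, (‖A t‖₊ : ℝ≥0∞) ^ 2) ≤ ENNReal.ofReal C ^ 2 := iSup_le fun t => by
          rw [← enorm_eq_nnnorm, ← ofReal_norm]
          gcongr
          exact hC t
      _ < ⊤ := ENNReal.pow_lt_top ENNReal.ofReal_lt_top

theorem continuous_apply_of_forall_hasSum [TopologicalSpace X] {a : X → ι → ℂ}
    (H : ∀ x : ell2 ι, ∃ f : X → ℂ, Continuous f ∧ ∀ t, HasSum (fun i => x i * a t i) (f t))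
    (i : ι) : Continuous fun t => a t i := by
  classical
  obtain ⟨f, hf, hsum⟩ := H (lp.single 2 i 1)
  convert hf using 1
  funext t
  refine HasSum.unique ?_ (hsum t)
  simpa using hasSum_single (f := fun j => (lp.single 2 i 1 : ell2 ι) j * a t j) i
    fun j hj => by simp [Pi.single_eq_of_ne hj]

theorem exists_norm_le_of_forall_hasSum (a : X → ell2 ι)
    (H : ∀ x : ell2 ι, ∃ f : X → ℂ, (∃ C, ∀ t, ‖f t‖ ≤ C) ∧
      ∀ t, HasSum (fun i => x i * a t i) (f t)) :
    ∃ C, ∀ t, ‖a t‖ ≤ C := by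
  obtain ⟨C, hC⟩ := banach_steinhaus (g := fun t => innerSL ℂ (star (a t))) fun x => by
    obtain ⟨f, ⟨C, hC⟩, hsum⟩ := H x
    exact ⟨C, fun t => by simpa [← (hsum t).unique (ell2.hasSum_mul (a t) x)] using hC t⟩
  exact ⟨C, fun t => by simpa using hC t⟩

theorem continuous_inner_star_of_norm_le [TopologicalSpace X] {a : X → ell2 ι}
    (hcont : ∀ i, Continuous fun t => a t i) {C : ℝ} (hC : ∀ t, ‖a t‖ ≤ C) (x : ell2 ι) :
    Continuous fun t => ⟪star (a t), x⟫_ℂ := by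
  classical
  have hT : ∀ t, ‖innerSL ℂ (star (a t))‖ ≤ C := fun t => by simpa using hC t
  refine (tendstoUniformly_apply_of_norm_le hT (lp.hasSum_single (by norm_num) x)).continuous
    (Filter.Eventually.of_forall fun F => ?_).frequently
  simpa [ell2.inner_star_single] using
    continuous_finsetSum F fun i _ => continuous_const.mul (hcont i)

theorem exists_continuous_bounded_hasSum_of_norm_le [TopologicalSpace X] {a : X → ell2 ι}
    (hcont : ∀ i, Continuous fun t => a t i) {C : ℝ} (hC : ∀ t, ‖a t‖ ≤ C) (x : ell2 ι) :
    ∃ f : X → ℂ, Continuous f ∧ (∃ C, ∀ t, ‖f t‖ ≤ C) ∧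
      ∀ t, HasSum (fun i => x i * a t i) (f t) := by
  refine ⟨fun t => ⟪star (a t), x⟫_ℂ, continuous_inner_star_of_norm_le hcont hC x,
    ⟨C * ‖x‖, fun t => ?_⟩, fun t => ell2.hasSum_mul (a t) x⟩
  calc ‖⟪star (a t), x⟫_ℂ‖ ≤ ‖star (a t)‖ * ‖x‖ := norm_inner_le_norm _ _
    _ ≤ C * ‖x‖ := by rw [norm_star]; gcongr; exact hC t

theorem forall_exists_continuous_bounded_hasSum_iff [TopologicalSpace X] (a : X → ι → ℂ) :
    (∀ x : ell2 ι, ∃ f : X → ℂ, Continuous f ∧ (∃ C, ∀ t, ‖f t‖ ≤ C) ∧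
        ∀ t, HasSum (fun i => x i * a t i) (f t)) ↔
      (∀ i, Continuous fun t => a t i) ∧ (⨆ t, ∑' i, (‖a t i‖₊ : ℝ≥0∞) ^ 2) < ⊤ := by
  constructor
  · intro H
    have hmem : ∀ t, Memℓp (a t) 2 := fun t => memℓp_two_of_forall_summable_mul fun x => by
      obtain ⟨f, -, -, hsum⟩ := H x
      exact (hsum t).summable
    refine ⟨continuous_apply_of_forall_hasSum fun x => ?_, ?_⟩
    · obtain ⟨f, hf, -, hsum⟩ := H x
      exact ⟨f, hf, hsum⟩
    · refine (ell2.iSup_tsum_nnnorm_sq_lt_top_iff fun t => (⟨a t, hmem t⟩ : ell2 ι)).mpr ?_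
      refine exists_norm_le_of_forall_hasSum _ fun x => ?_
      obtain ⟨f, -, hbdd, hsum⟩ := H x
      exact ⟨f, hbdd, hsum⟩
  · rintro ⟨hcont, hsup⟩
    have hmem : ∀ t, Memℓp (a t) 2 := fun t => memℓp_two_iff_tsum_nnnorm_sq_lt_top.mpr
      ((le_iSup (fun t => ∑' i, (‖a t i‖₊ : ℝ≥0∞) ^ 2) t).trans_lt hsup)
    obtain ⟨C, hC⟩ :=
      (ell2.iSup_tsum_nnnorm_sq_lt_top_iff fun t => (⟨a t, hmem t⟩ : ell2 ι)).mp hsup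
    exact exists_continuous_bounded_hasSum_of_norm_le (a := fun t => ⟨a t, hmem t⟩) hcont hC

end Kernel

end ell2

def ell2N.flattenEquiv {G : Type*} {N : ℕ} : ell2N G N ≃ ell2 (Fin N × G) where
  toFun x := ⟨fun p => (x p.1 : ∀ _ : G, ℂ) p.2, memℓp_two_prod_iff.mpr fun n => lp.memℓp (x n)⟩
  invFun y := WithLp.toLp 2 fun n => ⟨fun g => y (n, g), memℓp_two_prod_iff.mp (lp.memℓp y) n⟩
  left_inv _ := rfl
  right_inv _ := rfl

theorem statement19_general
    {Gt : Type*} [AddCommGroup Gt] [TopologicalSpace Gt] (Gs : AddSubgroup Gt) {N : ℕ}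
    (rep : Gs → Fin N → Gt → ℂ) :
    (∀ x : ell2N Gs N, ∃ f : Gt → ℂ, Continuous f ∧ (∃ C : ℝ, ∀ t, ‖f t‖ ≤ C) ∧
        ∀ t : Gt, HasSum (fun p : Fin N × Gs => (x p.1 : ∀ _ : Gs, ℂ) p.2 * rep p.2 p.1 t) (f t))
      ↔ ((∀ (g : Gs) (n : Fin N), Continuous (rep g n)) ∧
          ∀ n : Fin N, (⨆ t : Gt, ∑' g : Gs, ((‖rep g n t‖₊ : ℝ≥0∞) ^ 2)) < ⊤) := by
  have key := forall_exists_continuous_bounded_hasSum_iff fun t (p : Fin N × Gs) => rep p.2 p.1 t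
  rw [iSup_tsum_prod_lt_top_iff] at key
  exact ell2N.flattenEquiv.forall_congr_left.trans
    (key.trans (and_congr_left' (Prod.forall.trans forall_comm)))

/-- For a countable discrete subgroup `G` of an LCA group `G̃`, a unitary
representation `U` of `G̃` on `L²(G̃)` and `φ_1, …, φ_N ∈ L²(G̃)` with pointwise defined
representatives `rep g n` of `U(g)φ_n`: every `ℓ²_N(G)` coefficient family produces a pointwise
unconditionally convergent series whose sum is a continuous bounded function iff each `U(g)φ_n`
is continuous and `sup_t Σ_g |[U(g)φ_n](t)|² < ∞` for each `n`. -/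
theorem statement19
    {Gt : Type*} [AddCommGroup Gt] [TopologicalSpace Gt] [IsTopologicalAddGroup Gt]
    [LocallyCompactSpace Gt] [MeasurableSpace Gt] [BorelSpace Gt]
    (ν : Measure Gt) [ν.IsAddHaarMeasure]
    (Gs : AddSubgroup Gt) [Countable Gs] [DiscreteTopology Gs]
    (U : Multiplicative Gt →* (Lp ℂ 2 ν ≃ₗᵢ[ℂ] Lp ℂ 2 ν))
    {N : ℕ} (φ : Fin N → Lp ℂ 2 ν)
    (rep : Gs → Fin N → Gt → ℂ)
    (hrep : ∀ (g : Gs) (n : Fin N),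
      rep g n =ᵐ[ν] ⇑(U (Multiplicative.ofAdd (g : Gt)) (φ n))) :
    (∀ x : ell2N Gs N, ∃ f : Gt → ℂ, Continuous f ∧ (∃ C : ℝ, ∀ t, ‖f t‖ ≤ C) ∧
        ∀ t : Gt, HasSum (fun p : Fin N × Gs => (x p.1 : ∀ _ : Gs, ℂ) p.2 * rep p.2 p.1 t) (f t))
      ↔ ((∀ (g : Gs) (n : Fin N), Continuous (rep g n)) ∧
          ∀ n : Fin N, (⨆ t : Gt, ∑' g : Gs, ((‖rep g n t‖₊ : ℝ≥0∞) ^ 2)) < ⊤) :=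
  statement19_general Gs rep

end GroupSampling
end
end
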